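/- arXiv:1903.07407 — 2 statements merged into one kernel-verified Lean document; each statement's English description precedes it below -/
import Mathlib

section
/- Let p ∈ (1,∞). Define u : [0,1] → ℝ by u(x) = (1/(p·π_{2,p})) · sin_{2,p}(π_{2,p}·min(x, 1−x)) (i.e. sin_{2,p}(π_{2,p} x) is extended to x ∈ [1/2,1] by the symmetry sin_{2,p}(π_{2,p}x) = sin_{2,p}(π_{2,p}(1−x))). Then u is positive on (0,1), u(0) = u(1) = 0, u satisfies −p²·(u′(x))² + 2p·u(x)·u″(x) + 1 = 0 on (0,1), and u is symmetric with respect to x = 1/2, i.e. u(x) = u(1−x) for all x ∈ [0,1]. -/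
open Set MeasureTheory Filter

/-- Generalized arcsine: `arcsin_{p,q}(x) = ∫₀ˣ (1 - tᵠ)^(-1/p) dt`. -/
noncomputable def gArcsin (p q x : ℝ) : ℝ := ∫ t in (0:ℝ)..x, (1 - t ^ q) ^ (-(1 / p))

/-- Generalized pi: `π_{p,q} = 2 ∫₀¹ (1 - tᵠ)^(-1/p) dt`. -/
noncomputable def gPi (p q : ℝ) : ℝ := 2 * gArcsin p q 1

/-- `S` is the generalized sine `sin_{p,q}` (the inverse of `gArcsin p q` on `[0,1]`). -/
def IsGSin (p q : ℝ) (S : ℝ → ℝ) : Prop :=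
  ∀ y ∈ Icc (0:ℝ) 1, S (gArcsin p q y) = y

/-- `C` is the generalized cosine `cos_{p,q}`, the derivative of `S = sin_{p,q}`
on `[0, π_{p,q}/2]`. -/
def IsGCos (p q : ℝ) (S C : ℝ → ℝ) : Prop :=
  ∀ x ∈ Icc (0:ℝ) (gPi p q / 2), HasDerivWithinAt S (C x) (Icc (0:ℝ) (gPi p q / 2)) x

/-!
On `(0, π_{p,q}/2)` the inverse function theorem gives `sin' = (1 - sin^q)^{1/p}`. For `p = 2`
this square root cancels when differentiating once more, so `sin'' = -(q/2) sin^{q-1}`, which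
stays continuous up to `π_{2,q}/2`, and `cos² + sin^q = 1`. Reflecting about `π_{p,q}/2` extends
`sin` (evenly) and `cos` (oddly) to `(0, π_{p,q})`; at the midpoint the derivatives still exist
because the functions and their one-sided derivatives are continuous there. With `π = π_{2,p}`
and `u(x) = sin(π x)/(p π)` one gets `u' = cos(π x)/p` and `u'' = -(π/2) sin(π x)^{p-1}`,
so `-p² u'² + 2p u u'' + 1 = -cos² - sin^p + 1 = 0`.
-/

open Topology

theorem hasDerivAt_of_eventually_hasDerivAt_of_ne {E : Type*} [NormedAddCommGroup E]
    [NormedSpace ℝ E] {f g : ℝ → E} {x : ℝ} (f_diff : ∀ᶠ y in 𝓝[≠] x, HasDerivAt f (g y) y)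
    (hf : ContinuousAt f x) (hg : ContinuousAt g x) : HasDerivAt f (g x) x := by
  have hdiff : DifferentiableOn ℝ f {y | HasDerivAt f (g y) y} :=
    fun y hy => hy.differentiableAt.differentiableWithinAt
  have hlim : ∀ l ≤ 𝓝[≠] x, Tendsto (deriv f) l (𝓝 (g x)) := fun l hl =>
    (hg.tendsto.mono_left (hl.trans nhdsWithin_le_nhds)).congr'
      ((f_diff.filter_mono hl).mono fun y hy => hy.deriv.symm)
  have hgt : 𝓝[>] x ≤ 𝓝[≠] x := nhdsWithin_mono _ fun y hy => ne_of_gt hy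
  have hlt : 𝓝[<] x ≤ 𝓝[≠] x := nhdsWithin_mono _ fun y hy => ne_of_lt hy
  have hright := hasDerivWithinAt_Ici_of_tendsto_deriv hdiff hf.continuousWithinAt
    (f_diff.filter_mono hgt) (hlim _ hgt)
  have hleft := hasDerivWithinAt_Iic_of_tendsto_deriv hdiff hf.continuousWithinAt
    (f_diff.filter_mono hlt) (hlim _ hlt)
  simpa using hleft.union hright

theorem hasDerivAt_of_reflect {f g : ℝ → ℝ} {a ε t : ℝ}
    (hf_refl : ∀ s, f (a - s) = ε * f s) (hg_refl : ∀ s, g (a - s) = -ε * g s)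
    (hleft : ∀ s ∈ Ioo 0 (a / 2), HasDerivAt f (g s) s)
    (hf : ContinuousAt f (a / 2)) (hg : ContinuousAt g (a / 2)) (ht : t ∈ Ioo 0 a) :
    HasDerivAt f (g t) t := by
  have hright : ∀ s ∈ Ioo (a / 2) a, HasDerivAt f (g s) s := fun s hs => by
    have h := ((hleft (a - s) ⟨by linarith [hs.2], by linarith [hs.1]⟩).comp_const_sub a
      s).const_mul ε
    have hf_eq : (fun x => ε * f (a - x)) = f :=
      funext fun x => by rw [← hf_refl, sub_sub_cancel]
    have hg_eq := hg_refl (a - s)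
    rw [sub_sub_cancel] at hg_eq
    rw [hf_eq] at h
    rwa [hg_eq, neg_mul, ← mul_neg]
  have hne : ∀ s ∈ Ioo 0 a, s ≠ a / 2 → HasDerivAt f (g s) s := fun s hs hs' =>
    hs'.lt_or_gt.elim (fun h => hleft s ⟨hs.1, h⟩) fun h => hright s ⟨h, hs.2⟩
  rcases eq_or_ne t (a / 2) with rfl | h
  · exact hasDerivAt_of_eventually_hasDerivAt_of_ne
      (eventually_nhdsWithin_iff.2
        (mem_of_superset (Ioo_mem_nhds ht.1 ht.2) fun s hs hs' => hne s hs hs'))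
      hf hg
  · exact hne t ht h

section GeneralizedArcsin

variable {p q : ℝ}

lemma intervalIntegrable_gArcsin_integrand (hp : 1 < p) (hq : 1 ≤ q) :
    IntervalIntegrable (fun t : ℝ => (1 - t ^ q) ^ (-(1 / p))) volume 0 1 := by
  have hexp : -(1 / p) < 0 := neg_neg_of_pos (by positivity)
  have hdom : IntervalIntegrable (fun t : ℝ => (1 - t) ^ (-(1 / p))) volume 0 1 := by
    have := (intervalIntegral.intervalIntegrable_rpow' (a := 0) (b := 1)
      (r := -(1 / p)) (by rw [neg_lt_neg_iff, div_lt_one (by linarith)]; exact hp)).comp_sub_left 1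
    simpa using this.symm
  refine hdom.mono_fun' (by fun_prop : Measurable _).aestronglyMeasurable ?_
  rw [EventuallyLE, ae_restrict_iff' measurableSet_uIoc, uIoc_of_le zero_le_one]
  refine Eventually.of_forall fun t ⟨ht0, ht1⟩ => ?_
  rcases ht1.eq_or_lt with rfl | ht1
  · simp only [Real.one_rpow, sub_self, Real.zero_rpow hexp.ne, norm_zero, le_refl]
  · have hle : t ^ q ≤ t := by simpa using Real.rpow_le_rpow_of_exponent_ge ht0 ht1.le hq
    rw [Real.norm_of_nonneg (Real.rpow_nonneg (by linarith) _)]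
    exact Real.rpow_le_rpow_of_nonpos (by linarith) (by linarith) hexp.le

lemma intervalIntegrable_gArcsin_integrand_of_mem (hp : 1 < p) (hq : 1 ≤ q) {a b : ℝ}
    (ha : a ∈ Icc (0:ℝ) 1) (hb : b ∈ Icc (0:ℝ) 1) :
    IntervalIntegrable (fun t : ℝ => (1 - t ^ q) ^ (-(1 / p))) volume a b :=
  (intervalIntegrable_gArcsin_integrand hp hq).mono_set
    (by rw [uIcc_of_le zero_le_one]; exact uIcc_subset_Icc ha hb)

lemma gArcsin_zero : gArcsin p q 0 = 0 := by simp [gArcsin]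

lemma gArcsin_one : gArcsin p q 1 = gPi p q / 2 := by simp [gPi]

lemma strictMonoOn_gArcsin (hp : 1 < p) (hq : 1 ≤ q) : StrictMonoOn (gArcsin p q) (Icc 0 1) := by
  intro a ha b hb hab
  have h0 : (0:ℝ) ∈ Icc 0 1 := left_mem_Icc.2 zero_le_one
  rw [← sub_pos, gArcsin, gArcsin, intervalIntegral.integral_interval_sub_left
    (intervalIntegrable_gArcsin_integrand_of_mem hp hq h0 hb)
    (intervalIntegrable_gArcsin_integrand_of_mem hp hq h0 ha)]
  refine intervalIntegral.intervalIntegral_pos_of_pos_on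
    (intervalIntegrable_gArcsin_integrand_of_mem hp hq ha hb) (fun t ht => ?_) hab
  exact Real.rpow_pos_of_pos
    (sub_pos.2 (Real.rpow_lt_one (ha.1.trans ht.1.le) (ht.2.trans_le hb.2) (by linarith))) _

lemma continuousOn_gArcsin (hp : 1 < p) (hq : 1 ≤ q) : ContinuousOn (gArcsin p q) (Icc 0 1) := by
  have h := intervalIntegral.continuousOn_primitive_interval'
    (intervalIntegrable_gArcsin_integrand hp hq) left_mem_uIcc
  rw [uIcc_of_le zero_le_one] at h
  exact h

lemma gPi_pos (hp : 1 < p) (hq : 1 ≤ q) : 0 < gPi p q := by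
  have := strictMonoOn_gArcsin hp hq (left_mem_Icc.2 zero_le_one) (right_mem_Icc.2 zero_le_one)
    zero_lt_one
  rw [gArcsin_zero, gArcsin_one] at this
  linarith

lemma mapsTo_gArcsin (hp : 1 < p) (hq : 1 ≤ q) :
    MapsTo (gArcsin p q) (Icc 0 1) (Icc 0 (gPi p q / 2)) := fun y hy => by
  have hmono := (strictMonoOn_gArcsin hp hq).monotoneOn
  rw [← gArcsin_zero (p := p) (q := q), ← gArcsin_one]
  exact ⟨hmono (left_mem_Icc.2 zero_le_one) hy hy.1,
    hmono hy (right_mem_Icc.2 zero_le_one) hy.2⟩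

lemma surjOn_gArcsin (hp : 1 < p) (hq : 1 ≤ q) :
    SurjOn (gArcsin p q) (Icc 0 1) (Icc 0 (gPi p q / 2)) := by
  have h := intermediate_value_Icc zero_le_one (continuousOn_gArcsin hp hq)
  rwa [gArcsin_zero, gArcsin_one] at h

lemma hasStrictDerivAt_gArcsin (hp : 1 < p) (hq : 1 ≤ q) {y : ℝ} (hy : y ∈ Ioo (0:ℝ) 1) :
    HasStrictDerivAt (gArcsin p q) ((1 - y ^ q) ^ (-(1 / p))) y := by
  have hbase : 1 - y ^ q ≠ 0 :=
    (sub_pos.2 (Real.rpow_lt_one hy.1.le hy.2 (by linarith))).ne'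
  refine intervalIntegral.integral_hasStrictDerivAt_right
    (intervalIntegrable_gArcsin_integrand_of_mem hp hq (left_mem_Icc.2 zero_le_one)
      (Ioo_subset_Icc_self hy))
    (by fun_prop : Measurable _).aestronglyMeasurable.stronglyMeasurableAtFilter ?_
  exact ((continuousAt_const.sub (Real.continuousAt_rpow_const _ _ (Or.inl hy.1.ne'))).rpow_const
    (Or.inl hbase))

end GeneralizedArcsin

namespace IsGSin

variable {p q : ℝ} {S : ℝ → ℝ} {t : ℝ}

lemma apply_zero (hS : IsGSin p q S) : S 0 = 0 := by
  simpa [gArcsin_zero] using hS 0 (left_mem_Icc.2 zero_le_one)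

lemma apply_gPi_div_two (hS : IsGSin p q S) : S (gPi p q / 2) = 1 := by
  simpa [gArcsin_one] using hS 1 (right_mem_Icc.2 zero_le_one)

lemma mapsTo (hp : 1 < p) (hq : 1 ≤ q) (hS : IsGSin p q S) :
    MapsTo S (Icc 0 (gPi p q / 2)) (Icc 0 1) := fun t ht => by
  obtain ⟨y, hy, rfl⟩ := surjOn_gArcsin hp hq ht
  rwa [hS y hy]

lemma gArcsin_apply (hp : 1 < p) (hq : 1 ≤ q) (hS : IsGSin p q S)
    (ht : t ∈ Icc 0 (gPi p q / 2)) : gArcsin p q (S t) = t := by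
  obtain ⟨y, hy, rfl⟩ := surjOn_gArcsin hp hq ht
  rw [hS y hy]

lemma strictMonoOn (hp : 1 < p) (hq : 1 ≤ q) (hS : IsGSin p q S) :
    StrictMonoOn S (Icc 0 (gPi p q / 2)) := fun a ha b hb hab => by
  rwa [← (strictMonoOn_gArcsin hp hq).lt_iff_lt (hS.mapsTo hp hq ha) (hS.mapsTo hp hq hb),
    hS.gArcsin_apply hp hq ha, hS.gArcsin_apply hp hq hb]

lemma image_Icc (hp : 1 < p) (hq : 1 ≤ q) (hS : IsGSin p q S) :
    S '' Icc 0 (gPi p q / 2) = Icc 0 1 :=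
  (hS.mapsTo hp hq).image_subset.antisymm fun y hy =>
    ⟨gArcsin p q y, mapsTo_gArcsin hp hq hy, hS y hy⟩

lemma mem_Ioo (hp : 1 < p) (hq : 1 ≤ q) (hS : IsGSin p q S) (ht : t ∈ Ioo 0 (gPi p q / 2)) :
    S t ∈ Ioo 0 1 := by
  have hπ := gPi_pos hp hq
  rw [← hS.apply_zero, ← hS.apply_gPi_div_two]
  exact ⟨hS.strictMonoOn hp hq (left_mem_Icc.2 (by positivity)) (Ioo_subset_Icc_self ht) ht.1,
    hS.strictMonoOn hp hq (Ioo_subset_Icc_self ht) (right_mem_Icc.2 (by positivity)) ht.2⟩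

lemma hasDerivAt (hp : 1 < p) (hq : 1 ≤ q) (hS : IsGSin p q S) (ht : t ∈ Ioo 0 (gPi p q / 2)) :
    HasDerivAt S ((1 - S t ^ q) ^ (1 / p)) t := by
  obtain ⟨hy0, hy1⟩ := hS.mem_Ioo hp hq ht
  have hbase : 0 < 1 - S t ^ q := sub_pos.2 (Real.rpow_lt_one hy0.le hy1 (by linarith))
  have hinv := (hasStrictDerivAt_gArcsin hp hq ⟨hy0, hy1⟩).to_local_left_inverse
    (Real.rpow_pos_of_pos hbase _).ne'
    (eventually_of_mem (Ioo_mem_nhds hy0 hy1) fun y hy => hS y (Ioo_subset_Icc_self hy))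
  rw [hS.gArcsin_apply hp hq (Ioo_subset_Icc_self ht), Real.rpow_neg hbase.le, inv_inv] at hinv
  exact hinv.hasDerivAt

lemma continuousWithinAt_Iic (hp : 1 < p) (hq : 1 ≤ q) (hS : IsGSin p q S)
    (ht : t ∈ Ioc 0 (gPi p q / 2)) : ContinuousWithinAt S (Iic (gPi p q / 2)) t := by
  rcases ht.2.eq_or_lt with rfl | hlt
  · refine (hS.strictMonoOn hp hq).continuousWithinAt_left_of_image_mem_nhdsWithin
      (Icc_mem_nhdsLE ht.1) ?_
    rw [hS.image_Icc hp hq, hS.apply_gPi_div_two]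
    exact Icc_mem_nhdsLE zero_lt_one
  · exact (hS.hasDerivAt hp hq ⟨ht.1, hlt⟩).continuousAt.continuousWithinAt

end IsGSin

noncomputable def gSinExt (p q : ℝ) (S : ℝ → ℝ) (t : ℝ) : ℝ := S (min t (gPi p q - t))

noncomputable def gCosExt (p q : ℝ) (S : ℝ → ℝ) (t : ℝ) : ℝ :=
  (if t ≤ gPi p q / 2 then 1 else -1) * (1 - gSinExt p q S t ^ q) ^ (1 / p)

section GeneralizedSineExtension

variable {p q : ℝ} {S : ℝ → ℝ} {t : ℝ}

lemma gSinExt_gPi_sub (t : ℝ) : gSinExt p q S (gPi p q - t) = gSinExt p q S t := by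
  rw [gSinExt, gSinExt, sub_sub_cancel, min_comm]

lemma gSinExt_of_le (ht : t ≤ gPi p q / 2) : gSinExt p q S t = S t := by
  rw [gSinExt, min_eq_left (by linarith)]

lemma gSinExt_gPi_div_two (hS : IsGSin p q S) : gSinExt p q S (gPi p q / 2) = 1 := by
  rw [gSinExt_of_le le_rfl, hS.apply_gPi_div_two]

lemma min_sub_le_half (a t : ℝ) : min t (a - t) ≤ a / 2 := by
  rcases le_total t (a / 2) with h | h
  · exact min_le_of_left_le h
  · exact min_le_of_right_le (by linarith)

lemma min_sub_mem_Ioc {a t : ℝ} (ht : t ∈ Ioo 0 a) : min t (a - t) ∈ Ioc 0 (a / 2) :=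
  ⟨lt_min ht.1 (sub_pos.2 ht.2), min_sub_le_half a t⟩

lemma gSinExt_mem_Ioc (hp : 1 < p) (hq : 1 ≤ q) (hS : IsGSin p q S) (ht : t ∈ Ioo 0 (gPi p q)) :
    gSinExt p q S t ∈ Ioc 0 1 := by
  have hm := min_sub_mem_Ioc ht
  have hmono := hS.strictMonoOn hp hq
  have h0 : (0:ℝ) ∈ Icc 0 (gPi p q / 2) := left_mem_Icc.2 (hm.1.le.trans hm.2)
  rw [gSinExt, ← hS.apply_zero, ← hS.apply_gPi_div_two]
  exact ⟨hmono h0 (Ioc_subset_Icc_self hm) hm.1,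
    hmono.monotoneOn (Ioc_subset_Icc_self hm) (right_mem_Icc.2 (hm.1.le.trans hm.2)) hm.2⟩

lemma continuousAt_gSinExt (hp : 1 < p) (hq : 1 ≤ q) (hS : IsGSin p q S)
    (ht : t ∈ Ioo 0 (gPi p q)) : ContinuousAt (gSinExt p q S) t := by
  have hmin : Continuous fun s => min s (gPi p q - s) := by fun_prop
  have hmaps : MapsTo (fun s => min s (gPi p q - s)) univ (Iic (gPi p q / 2)) :=
    fun s _ => min_sub_le_half _ s
  have h : ContinuousWithinAt (S ∘ fun s => min s (gPi p q - s)) univ t :=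
    (hS.continuousWithinAt_Iic hp hq (min_sub_mem_Ioc ht)).comp (x := t)
      hmin.continuousAt.continuousWithinAt hmaps
  exact (continuousWithinAt_univ _ _).1 h

lemma gCosExt_gPi_div_two (hp : 0 < p) (hS : IsGSin p q S) : gCosExt p q S (gPi p q / 2) = 0 := by
  rw [gCosExt, gSinExt_gPi_div_two hS, Real.one_rpow, sub_self, Real.zero_rpow (by positivity),
    mul_zero]

lemma gCosExt_gPi_sub (hp : 0 < p) (hS : IsGSin p q S) (t : ℝ) :
    gCosExt p q S (gPi p q - t) = -gCosExt p q S t := by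
  rcases lt_trichotomy t (gPi p q / 2) with h | h | h
  · rw [gCosExt, gCosExt, gSinExt_gPi_sub, if_neg (by linarith), if_pos h.le]
    ring
  · rw [h, show gPi p q - gPi p q / 2 = gPi p q / 2 by ring, gCosExt_gPi_div_two hp hS, neg_zero]
  · rw [gCosExt, gCosExt, gSinExt_gPi_sub, if_pos (by linarith), if_neg (by linarith)]
    ring

lemma abs_gCosExt (t : ℝ) : |gCosExt p q S t| = |(1 - gSinExt p q S t ^ q) ^ (1 / p)| := by
  rw [gCosExt, abs_mul]
  split_ifs <;> simp

lemma continuousAt_gCosExt_gPi_div_two (hp : 1 < p) (hq : 1 ≤ q) (hS : IsGSin p q S) :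
    ContinuousAt (gCosExt p q S) (gPi p q / 2) := by
  have hπ := gPi_pos hp hq
  have hmid : gPi p q / 2 ∈ Ioo 0 (gPi p q) := ⟨by positivity, by linarith⟩
  have habs : ContinuousAt (fun t => |(1 - gSinExt p q S t ^ q) ^ (1 / p)|) (gPi p q / 2) :=
    ((continuousAt_const.sub ((continuousAt_gSinExt hp hq hS hmid).rpow_const
      (Or.inr (by linarith)))).rpow_const (Or.inr (by positivity))).abs
  have h0 : |(1 - gSinExt p q S (gPi p q / 2) ^ q) ^ (1 / p)| = 0 := by
    rw [← abs_gCosExt, gCosExt_gPi_div_two (by linarith) hS, abs_zero]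
  have h := habs.tendsto
  rw [h0] at h
  rw [ContinuousAt, gCosExt_gPi_div_two (by linarith) hS, tendsto_zero_iff_abs_tendsto_zero]
  exact h.congr fun t => (abs_gCosExt t).symm

lemma hasDerivAt_gSinExt_of_lt (hp : 1 < p) (hq : 1 ≤ q) (hS : IsGSin p q S)
    (ht : t ∈ Ioo 0 (gPi p q / 2)) : HasDerivAt (gSinExt p q S) (gCosExt p q S t) t := by
  have heq : gSinExt p q S =ᶠ[𝓝 t] S :=
    eventually_of_mem (Iio_mem_nhds ht.2) fun s hs => gSinExt_of_le (le_of_lt hs)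
  rw [gCosExt, if_pos ht.2.le, one_mul, gSinExt_of_le ht.2.le]
  exact (hS.hasDerivAt hp hq ht).congr_of_eventuallyEq heq

lemma hasDerivAt_gSinExt (hp : 1 < p) (hq : 1 ≤ q) (hS : IsGSin p q S)
    (ht : t ∈ Ioo 0 (gPi p q)) : HasDerivAt (gSinExt p q S) (gCosExt p q S t) t := by
  have hπ := gPi_pos hp hq
  refine hasDerivAt_of_reflect (ε := 1) (fun s => by rw [gSinExt_gPi_sub, one_mul])
    (fun s => by rw [gCosExt_gPi_sub (by linarith) hS, neg_one_mul])
    (fun s hs => hasDerivAt_gSinExt_of_lt hp hq hS hs)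
    (continuousAt_gSinExt hp hq hS ⟨by positivity, by linarith⟩)
    (continuousAt_gCosExt_gPi_div_two hp hq hS) ht

lemma hasDerivAt_gCosExt_two_of_lt (hq : 1 ≤ q) (hS : IsGSin 2 q S)
    (ht : t ∈ Ioo 0 (gPi 2 q / 2)) :
    HasDerivAt (gCosExt 2 q S) (-(q / 2) * gSinExt 2 q S t ^ (q - 1)) t := by
  obtain ⟨hs0, hs1⟩ := hS.mem_Ioo one_lt_two hq ht
  have hbase : 0 < 1 - S t ^ q := sub_pos.2 (Real.rpow_lt_one hs0.le hs1 (by linarith))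
  have h := ((hS.hasDerivAt one_lt_two hq ht).rpow_const (Or.inr hq) |>.const_sub 1).rpow_const
    (p := 1 / 2) (Or.inl hbase.ne')
  have heq : gCosExt 2 q S =ᶠ[𝓝 t] fun s => (1 - S s ^ q) ^ (1 / (2:ℝ)) :=
    eventually_of_mem (Iio_mem_nhds ht.2) fun s hs => by
      rw [gCosExt, if_pos (le_of_lt hs), one_mul, gSinExt_of_le (le_of_lt hs)]
  have hhalf : (1 - S t ^ q) ^ (1 / (2:ℝ)) * (1 - S t ^ q) ^ (1 / (2:ℝ) - 1) = 1 := by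
    rw [← Real.rpow_add hbase]
    norm_num
  rw [gSinExt_of_le ht.2.le]
  refine (h.congr_of_eventuallyEq heq).congr_deriv ?_
  linear_combination (-(q / 2) * S t ^ (q - 1)) * hhalf

lemma hasDerivAt_gCosExt_two (hq : 1 ≤ q) (hS : IsGSin 2 q S) (ht : t ∈ Ioo 0 (gPi 2 q)) :
    HasDerivAt (gCosExt 2 q S) (-(q / 2) * gSinExt 2 q S t ^ (q - 1)) t := by
  have hπ := gPi_pos one_lt_two hq
  have hmid : gPi 2 q / 2 ∈ Ioo 0 (gPi 2 q) := ⟨by positivity, by linarith⟩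
  refine hasDerivAt_of_reflect (ε := -1) (fun s => by rw [gCosExt_gPi_sub two_pos hS, neg_one_mul])
    (fun s => by simp only [gSinExt_gPi_sub, neg_neg, one_mul])
    (fun s hs => hasDerivAt_gCosExt_two_of_lt hq hS hs)
    (continuousAt_gCosExt_gPi_div_two one_lt_two hq hS)
    (continuousAt_const.mul ((continuousAt_gSinExt one_lt_two hq hS hmid).rpow_const
      (Or.inr (by linarith)))) ht

lemma gCosExt_two_sq (hq : 1 ≤ q) (hS : IsGSin 2 q S) (ht : t ∈ Ioo 0 (gPi 2 q)) :
    gCosExt 2 q S t ^ 2 = 1 - gSinExt 2 q S t ^ q := by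
  obtain ⟨hs0, hs1⟩ := gSinExt_mem_Ioc one_lt_two hq hS ht
  have hbase : 0 ≤ 1 - gSinExt 2 q S t ^ q :=
    sub_nonneg.2 (Real.rpow_le_one hs0.le hs1 (by linarith))
  rw [gCosExt, mul_pow, ← Real.sqrt_eq_rpow, Real.sq_sqrt hbase]
  split_ifs <;> ring

end GeneralizedSineExtension

/-- Corollary 2.3: `u(x) = (1/(p π_{2,p})) sin_{2,p}(π_{2,p} min(x,1-x))` is the positive
solution of `-p²(u')² + 2p u u'' + 1 = 0`, `u(0)=u(1)=0`, and it is symmetric about `x = 1/2`. -/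
theorem stmt_2 (p : ℝ) (hp : 1 < p)
    (S : ℝ → ℝ) (hS : IsGSin 2 p S)
    (u : ℝ → ℝ)
    (hu : ∀ x, u x = (1 / (p * gPi 2 p)) * S (gPi 2 p * min x (1 - x))) :
    (∀ x ∈ Ioo (0:ℝ) 1, 0 < u x) ∧ u 0 = 0 ∧ u 1 = 0 ∧
    (∃ u' u'' : ℝ → ℝ,
      ContinuousOn u'' (Ioo 0 1) ∧
      (∀ x ∈ Ioo (0:ℝ) 1, HasDerivAt u (u' x) x ∧ HasDerivAt u' (u'' x) x) ∧
      (∀ x ∈ Ioo (0:ℝ) 1,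
        -(p ^ 2) * (u' x) ^ 2 + 2 * p * u x * u'' x + 1 = 0)) ∧
    (∀ x ∈ Icc (0:ℝ) 1, u x = u (1 - x)) := by
  have hp0 : 0 < p := by linarith
  have hπ : 0 < gPi 2 p := gPi_pos one_lt_two hp.le
  have hmem : ∀ x ∈ Ioo (0:ℝ) 1, gPi 2 p * x ∈ Ioo 0 (gPi 2 p) := fun x hx =>
    ⟨mul_pos hπ hx.1, mul_lt_of_lt_one_right hπ hx.2⟩
  have hu_ext : u = fun x => (1 / (p * gPi 2 p)) * gSinExt 2 p S (gPi 2 p * x) :=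
    funext fun x => by rw [hu, gSinExt, mul_min_of_nonneg _ _ hπ.le, mul_one_sub]
  have hscale := fun x => (hasDerivAt_id x).const_mul (gPi 2 p)
  refine ⟨fun x hx => ?_, by simp [hu, hS.apply_zero], by simp [hu, hS.apply_zero],
    ⟨fun x => (1 / p) * gCosExt 2 p S (gPi 2 p * x),
      fun x => -(gPi 2 p / 2) * gSinExt 2 p S (gPi 2 p * x) ^ (p - 1),
      fun x hx => ?_, fun x hx => ⟨?_, ?_⟩, fun x hx => ?_⟩,
    fun x _ => by rw [hu, hu, sub_sub_cancel, min_comm]⟩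
  · rw [hu_ext]
    exact mul_pos (by positivity) (gSinExt_mem_Ioc one_lt_two hp.le hS (hmem x hx)).1
  · exact (continuousAt_const.mul (((continuousAt_gSinExt one_lt_two hp.le hS (hmem x hx)).comp
      (hscale x).continuousAt).rpow_const (Or.inr (by linarith)))).continuousWithinAt
  · rw [hu_ext]
    refine (((hasDerivAt_gSinExt one_lt_two hp.le hS (hmem x hx)).comp x (hscale x)).const_mul
      _).congr_deriv ?_
    field_simp
  · refine (((hasDerivAt_gCosExt_two hp.le hS (hmem x hx)).comp x (hscale x)).const_mul
      _).congr_deriv ?_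
    field_simp
  · obtain ⟨hs0, -⟩ := gSinExt_mem_Ioc one_lt_two hp.le hS (hmem x hx)
    have hC := gCosExt_two_sq hp.le hS (hmem x hx)
    have hs : gSinExt 2 p S (gPi 2 p * x) * gSinExt 2 p S (gPi 2 p * x) ^ (p - 1) =
        gSinExt 2 p S (gPi 2 p * x) ^ p := by
      rw [Real.rpow_sub_one hs0.ne']
      field_simp
    rw [hu_ext]
    field_simp
    linear_combination (-1) * hC - hs
end

section
/- Let p, q ∈ (1,∞), k > −1 and ℓ > 1−p. Then ∫₀^{π_{p,q}/2} sin_{p,q}^k(t) · cos_{p,q}^ℓ(t) dt = (1/q) · B((k+1)/q, 1 + (ℓ−1)/p), where B denotes the Euler beta function B(x,y) = ∫₀^1 t^{x−1}(1−t)^{y−1} dt. -/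
open Set MeasureTheory Filter

/-- The Euler beta function `B(x,y) = ∫₀¹ t^{x-1}(1-t)^{y-1} dt`. -/
noncomputable def betaFn (x y : ℝ) : ℝ := ∫ t in (0:ℝ)..1, t ^ (x - 1) * (1 - t) ^ (y - 1)

theorem aux_integrable (p q : ℝ) (hp : 1 < p) (hq : 1 < q) :
    IntervalIntegrable (fun t : ℝ => (1 - t ^ q) ^ (-(1/p))) volume 0 1 := by
  have hp0 : (0:ℝ) < p := lt_trans one_pos hp
  have hq0 : (0:ℝ) < q := lt_trans one_pos hq
  have hrne : -(1/p) ≠ 0 := by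
    have : (0:ℝ) < 1/p := by positivity
    linarith
  have hr : (-1:ℝ) < -(1/p) := by
    have : 1/p < 1 := by rw [div_lt_one hp0]; exact hp
    linarith
  have hb : IntervalIntegrable (fun t : ℝ => (1 - t) ^ (-(1/p))) volume 0 1 := by
    have := (intervalIntegral.intervalIntegrable_rpow' (a := 0) (b := 1) hr).comp_sub_left 1
    exact IntervalIntegrable.symm (by simpa using this)
  have hmeas : Measurable fun t : ℝ => (1 - t ^ q) ^ (-(1/p)) := by
    fun_prop
  apply hb.mono_fun hmeas.aestronglyMeasurable
  rw [uIoc_of_le (zero_le_one' ℝ)]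
  filter_upwards [ae_restrict_mem measurableSet_Ioc] with t ht
  rcases eq_or_lt_of_le ht.2 with h1 | h1
  · simp [h1, Real.one_rpow, Real.zero_rpow hrne]
  · have h1t : (0:ℝ) < 1 - t := by linarith
    have htq : t ^ q ≤ t := by
      calc t ^ q ≤ t ^ (1:ℝ) :=
            Real.rpow_le_rpow_of_exponent_ge ht.1 h1.le hq.le
        _ = t := Real.rpow_one t
    have hle : 1 - t ≤ 1 - t ^ q := by linarith
    have := Real.rpow_le_rpow_of_nonpos h1t hle (by
      have h1p : (0:ℝ) < 1/p := by positivity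
      linarith : -(1/p) ≤ 0)
    have hn1 : (0:ℝ) ≤ (1 - t ^ q) ^ (-(1/p)) := Real.rpow_nonneg (by linarith) _
    have hn2 : (0:ℝ) ≤ (1 - t) ^ (-(1/p)) := Real.rpow_nonneg h1t.le _
    simp only [Real.norm_eq_abs, abs_of_nonneg hn1, abs_of_nonneg hn2]
    exact this

theorem aux_deriv (p q : ℝ) (hp : 1 < p) (hq : 1 < q) {y : ℝ} (hy : y ∈ Ioo (0:ℝ) 1) :
    HasDerivAt (gArcsin p q) ((1 - y ^ q) ^ (-(1/p))) y := by
  have hq0 : (0:ℝ) < q := lt_trans one_pos hq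
  have hyq : y ^ q < 1 := Real.rpow_lt_one hy.1.le hy.2 hq0
  have h1 : (0:ℝ) < 1 - y ^ q := by linarith
  have hmeas : Measurable fun t : ℝ => (1 - t ^ q) ^ (-(1/p)) := by fun_prop
  have hcy : ContinuousAt (fun t : ℝ => (1 - t ^ q) ^ (-(1/p))) y := by
    have hinner : ContinuousAt (fun t : ℝ => 1 - t ^ q) y :=
      continuousAt_const.sub (Real.continuousAt_rpow_const y q (Or.inl (ne_of_gt hy.1)))
    exact hinner.rpow_const (Or.inl (ne_of_gt h1))
  have hint : IntervalIntegrable (fun t : ℝ => (1 - t ^ q) ^ (-(1/p))) volume 0 y :=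
    (aux_integrable p q hp hq).mono_set
      (uIcc_subset_uIcc left_mem_uIcc (by
        rw [uIcc_of_le (zero_le_one' ℝ)]; exact ⟨hy.1.le, hy.2.le⟩))
  exact intervalIntegral.integral_hasDerivAt_right hint
    (hmeas.stronglyMeasurable.stronglyMeasurableAtFilter) hcy

theorem aux_mono (p q : ℝ) (hp : 1 < p) (hq : 1 < q) :
    StrictMonoOn (gArcsin p q) (Icc 0 1) := by
  have hq0 : (0:ℝ) < q := lt_trans one_pos hq
  intro a ha b hb hab
  have hsub : ∀ c d : ℝ, c ∈ Icc (0:ℝ) 1 → d ∈ Icc (0:ℝ) 1 →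
      IntervalIntegrable (fun t : ℝ => (1 - t ^ q) ^ (-(1/p))) volume c d := fun c d hc hd =>
    (aux_integrable p q hp hq).mono_set
      (uIcc_subset_uIcc (by rw [uIcc_of_le (zero_le_one' ℝ)]; exact hc)
        (by rw [uIcc_of_le (zero_le_one' ℝ)]; exact hd))
  have key : gArcsin p q b - gArcsin p q a = ∫ t in a..b, (1 - t ^ q) ^ (-(1/p)) := by
    have := intervalIntegral.integral_add_adjacent_intervals
      (hsub 0 a (left_mem_Icc.mpr zero_le_one) ha) (hsub a b ha hb)
    unfold gArcsin
    linarith [this]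
  have hpos : 0 < ∫ t in a..b, (1 - t ^ q) ^ (-(1/p)) := by
    apply intervalIntegral.intervalIntegral_pos_of_pos_on (hsub a b ha hb) _ hab
    intro x hx
    have hx0 : 0 < x := lt_of_le_of_lt ha.1 hx.1
    have hx1 : x < 1 := lt_of_lt_of_le hx.2 hb.2
    have : x ^ q < 1 := Real.rpow_lt_one hx0.le hx1 hq0
    exact Real.rpow_pos_of_pos (by linarith) _
  linarith

theorem aux_cont (p q : ℝ) (hp : 1 < p) (hq : 1 < q) :
    ContinuousOn (gArcsin p q) (Icc 0 1) := by
  have h := aux_integrable p q hp hq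
  rw [intervalIntegrable_iff_integrableOn_Ioc_of_le (zero_le_one' ℝ)] at h
  have h' : IntegrableOn (fun t : ℝ => (1 - t ^ q) ^ (-(1/p))) (uIcc 0 1) volume := by
    rw [uIcc_of_le (zero_le_one' ℝ), integrableOn_Icc_iff_integrableOn_Ioc]
    exact h
  have := intervalIntegral.continuousOn_primitive_interval h'
  rwa [uIcc_of_le (zero_le_one' ℝ)] at this

theorem aux_image (p q : ℝ) (hp : 1 < p) (hq : 1 < q) :
    gArcsin p q '' Ioo 0 1 = Ioo 0 (gArcsin p q 1) := by
  have hg0 : gArcsin p q 0 = 0 := intervalIntegral.integral_same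
  have hmono := aux_mono p q hp hq
  apply Subset.antisymm
  · rintro _ ⟨y, hy, rfl⟩
    constructor
    · rw [← hg0]
      exact hmono (left_mem_Icc.mpr zero_le_one) ⟨hy.1.le, hy.2.le⟩ hy.1
    · exact hmono ⟨hy.1.le, hy.2.le⟩ (right_mem_Icc.mpr zero_le_one) hy.2
  · have := intermediate_value_Ioo (zero_le_one' ℝ) (aux_cont p q hp hq)
    rwa [hg0] at this

theorem aux_cos (p q : ℝ) (hp : 1 < p) (hq : 1 < q)
    (S C : ℝ → ℝ) (hS : IsGSin p q S) (hC : IsGCos p q S C)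
    {y : ℝ} (hy : y ∈ Ioo (0:ℝ) 1) :
    C (gArcsin p q y) = (1 - y ^ q) ^ (1/p) := by
  have hp0 : (0:ℝ) < p := lt_trans one_pos hp
  have hq0 : (0:ℝ) < q := lt_trans one_pos hq
  have hg0 : gArcsin p q 0 = 0 := intervalIntegral.integral_same
  have hmono := aux_mono p q hp hq
  have hyIcc : y ∈ Icc (0:ℝ) 1 := ⟨hy.1.le, hy.2.le⟩
  have hhalf : gPi p q / 2 = gArcsin p q 1 := by unfold gPi; ring
  have hmaps : MapsTo (gArcsin p q) (Icc 0 1) (Icc 0 (gPi p q / 2)) := by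
    intro z hz
    rw [hhalf]
    constructor
    · rw [← hg0]
      exact hmono.monotoneOn (left_mem_Icc.mpr zero_le_one) hz hz.1
    · exact hmono.monotoneOn hz (right_mem_Icc.mpr zero_le_one) hz.2
  have hyq : y ^ q < 1 := Real.rpow_lt_one hy.1.le hy.2 hq0
  have h1 : (0:ℝ) < 1 - y ^ q := by linarith
  have hSd := hC (gArcsin p q y) (hmaps hyIcc)
  have hgd : HasDerivWithinAt (gArcsin p q) ((1 - y ^ q) ^ (-(1/p))) (Icc 0 1) y :=
    (aux_deriv p q hp hq hy).hasDerivWithinAt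
  have hcomp : HasDerivWithinAt (S ∘ gArcsin p q)
      (C (gArcsin p q y) * (1 - y ^ q) ^ (-(1/p))) (Icc 0 1) y :=
    hSd.comp_of_eq y hgd hmaps rfl
  have hid : HasDerivWithinAt (S ∘ gArcsin p q) 1 (Icc (0:ℝ) 1) y := by
    refine (hasDerivWithinAt_id y (Icc (0:ℝ) 1)).congr (fun z hz => ?_) (hS y hyIcc)
    exact hS z hz
  have hu : UniqueDiffWithinAt ℝ (Icc (0:ℝ) 1) y := (uniqueDiffOn_Icc one_pos) y hyIcc
  have heq : C (gArcsin p q y) * (1 - y ^ q) ^ (-(1/p)) = 1 := by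
    rw [← hcomp.derivWithin hu, hid.derivWithin hu]
  have hpos : (0:ℝ) < (1 - y ^ q) ^ (-(1/p)) := Real.rpow_pos_of_pos h1 _
  have hCval : C (gArcsin p q y) = ((1 - y ^ q) ^ (-(1/p)))⁻¹ := by
    field_simp at heq
    field_simp
    linarith [heq]
  rw [hCval, Real.rpow_neg (le_of_lt h1), inv_inv]

/-- Theorem 3.1, formula (3.2): for `k > -1` and `ℓ > 1-p`,
`∫₀^{π_{p,q}/2} sin_{p,q}ᵏ t · cos_{p,q}^ℓ t dt = (1/q) B((k+1)/q, 1+(ℓ-1)/p)`. -/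
theorem stmt_4 (p q k l : ℝ) (hp : 1 < p) (hq : 1 < q)
    (hk : -1 < k) (hl : 1 - p < l)
    (S C : ℝ → ℝ) (hS : IsGSin p q S) (hC : IsGCos p q S C) :
    ∫ t in (0:ℝ)..(gPi p q / 2), S t ^ k * C t ^ l =
      (1 / q) * betaFn ((k + 1) / q) (1 + (l - 1) / p) := by
  have hp0 : (0:ℝ) < p := lt_trans one_pos hp
  have hq0 : (0:ℝ) < q := lt_trans one_pos hq
  have hg0 : gArcsin p q 0 = 0 := intervalIntegral.integral_same
  have hmono := aux_mono p q hp hq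
  have hg1pos : 0 < gArcsin p q 1 := by
    have := hmono (left_mem_Icc.mpr zero_le_one) (right_mem_Icc.mpr zero_le_one) zero_lt_one
    rwa [hg0] at this
  have hhalf : gPi p q / 2 = gArcsin p q 1 := by unfold gPi; ring
  have hlhs : (∫ t in (0:ℝ)..(gPi p q / 2), S t ^ k * C t ^ l)
      = ∫ y in Ioo (0:ℝ) 1, y ^ k * (1 - y ^ q) ^ ((l - 1) / p) := by
    rw [hhalf, intervalIntegral.integral_of_le hg1pos.le, integral_Ioc_eq_integral_Ioo,
      ← aux_image p q hp hq,
      integral_image_eq_integral_abs_deriv_smul measurableSet_Ioo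
        (fun y hy => (aux_deriv p q hp hq hy).hasDerivWithinAt)
        (hmono.injOn.mono Ioo_subset_Icc_self) _]
    apply setIntegral_congr_fun measurableSet_Ioo
    intro y hy
    have hyq : y ^ q < 1 := Real.rpow_lt_one hy.1.le hy.2 hq0
    have h1 : (0:ℝ) < 1 - y ^ q := by linarith
    show |(1 - y ^ q) ^ (-(1/p))| • (S (gArcsin p q y) ^ k * C (gArcsin p q y) ^ l)
      = y ^ k * (1 - y ^ q) ^ ((l - 1) / p)
    rw [hS y ⟨hy.1.le, hy.2.le⟩, aux_cos p q hp hq S C hS hC hy, smul_eq_mul,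
      abs_of_nonneg (Real.rpow_nonneg h1.le _), ← Real.rpow_mul h1.le,
      mul_left_comm, ← Real.rpow_add h1]
    congr 2
    field_simp
    ring
  have himgq : (fun y : ℝ => y ^ q) '' Ioo 0 1 = Ioo 0 1 := by
    ext u
    constructor
    · rintro ⟨y, hy, rfl⟩
      exact ⟨Real.rpow_pos_of_pos hy.1 q, Real.rpow_lt_one hy.1.le hy.2 hq0⟩
    · intro hu
      refine ⟨u ^ (1/q : ℝ), ⟨Real.rpow_pos_of_pos hu.1 _,
        Real.rpow_lt_one hu.1.le hu.2 (by positivity)⟩, ?_⟩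
      show (u ^ (1/q : ℝ)) ^ q = u
      rw [← Real.rpow_mul hu.1.le, one_div_mul_cancel hq0.ne', Real.rpow_one]
  have hmonoq : StrictMonoOn (fun y : ℝ => y ^ q) (Icc 0 1) :=
    fun a ha b hb hab => Real.rpow_lt_rpow ha.1 hab hq0
  have hbeta : betaFn ((k + 1) / q) (1 + (l - 1) / p)
      = q * ∫ y in Ioo (0:ℝ) 1, y ^ k * (1 - y ^ q) ^ ((l - 1) / p) := by
    unfold betaFn
    rw [intervalIntegral.integral_of_le (zero_le_one' ℝ), integral_Ioc_eq_integral_Ioo]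
    nth_rewrite 1 [show Ioo (0:ℝ) 1 = (fun y : ℝ => y ^ q) '' Ioo 0 1 from himgq.symm]
    rw [integral_image_eq_integral_abs_deriv_smul measurableSet_Ioo
        (fun y hy => (Real.hasDerivAt_rpow_const (Or.inr hq.le)).hasDerivWithinAt)
        (hmonoq.injOn.mono Ioo_subset_Icc_self) _,
      ← integral_const_mul]
    apply setIntegral_congr_fun measurableSet_Ioo
    intro y hy
    have hyq : y ^ q < 1 := Real.rpow_lt_one hy.1.le hy.2 hq0
    have h1 : (0:ℝ) < 1 - y ^ q := by linarith
    have habs : |q * y ^ (q - 1 : ℝ)| = q * y ^ (q - 1 : ℝ) :=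
      abs_of_pos (mul_pos hq0 (Real.rpow_pos_of_pos hy.1 _))
    have hex1 : (1 : ℝ) + (l - 1) / p - 1 = (l - 1) / p := by ring
    have hex2 : (y ^ q) ^ ((k + 1) / q - 1) = y ^ (k + 1 - q) := by
      rw [← Real.rpow_mul hy.1.le]
      congr 1
      field_simp
    have hex3 : y ^ (q - 1 : ℝ) * y ^ (k + 1 - q : ℝ) = y ^ k := by
      rw [← Real.rpow_add hy.1]
      norm_num
    show |q * y ^ (q - 1 : ℝ)| • ((y ^ q) ^ ((k + 1) / q - 1) * (1 - y ^ q) ^ (1 + (l - 1) / p - 1))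
      = q * (y ^ k * (1 - y ^ q) ^ ((l - 1) / p))
    rw [smul_eq_mul, habs, hex1, hex2, ← hex3]
    ring
  rw [hlhs, hbeta, one_div, inv_mul_cancel_left₀ hq0.ne']
end
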